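/- For every integer n ≥ 2, every initial configuration C_0 ⊆ {0,...,n-1}, and every natural number t, the expected potential of the configuration C_t after t steps of probabilistic bubble-sort satisfies E[P(C_t)] ≤ (1 - 1/(4(n-1)))^t · P(C_0). -/

import Mathlib

open scoped ENNReal

/-- `lcount C i` is the number of ones strictly before position `i`,
i.e. `|C ∩ {0,…,i-1}|`. -/
def lcount (C : Finset ℕ) (i : ℕ) : ℕ := (C ∩ Finset.range i).card

/-- Potential of a configuration `C ⊆ {0,…,n-1}`:
`P(C) = Σ_{i∈C} (2^(n-k+2l_i-i) - 2^(l_i))` where `k = |C|`, `l_i = |C ∩ {0,…,i-1}|`. -/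
def potential (n : ℕ) (C : Finset ℕ) : ℕ :=
  ∑ i ∈ C, (2 ^ (n - C.card + 2 * lcount C i - i) - 2 ^ lcount C i)

/-- One step of probabilistic bubble-sort at position `j`: if `j ∈ C` and `j+1 ∉ C`,
swap, i.e. `(C \ {j}) ∪ {j+1}`; otherwise unchanged. -/
def bstep (C : Finset ℕ) (j : ℕ) : Finset ℕ :=
  if j ∈ C ∧ j + 1 ∉ C then insert (j + 1) (C.erase j) else C

/-- The distribution of one step of probabilistic bubble-sort: the position `j` is chosen
uniformly at random from `{0,…,n-2}` and `bstep C j` is returned. -/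
noncomputable def stepPMF (n : ℕ) (C : Finset ℕ) : PMF (Finset ℕ) :=
  if h : (Finset.range (n - 1)).Nonempty then
    (PMF.uniformOfFinset (Finset.range (n - 1)) h).map (bstep C)
  else PMF.pure C

/-- The distribution of the configuration after `t` steps of probabilistic bubble-sort,
started from `C`. -/
noncomputable def iterPMF (n : ℕ) (C : Finset ℕ) : ℕ → PMF (Finset ℕ)
  | 0 => PMF.pure C
  | t + 1 => (iterPMF n C t).bind (stepPMF n)


lemma range_sdiff_card (n m : ℕ) : (Finset.range n \ Finset.range m).card ≤ n - m := by
  have h := Finset.card_sdiff_add_card_inter (Finset.range n) (Finset.range m)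
  have h2 : Finset.range n ∩ Finset.range m = Finset.range (min n m) := by
    ext x; simp [Nat.lt_min]
  rw [h2] at h
  simp only [Finset.card_range] at h
  omega

lemma inter_range_succ_of_mem {C : Finset ℕ} {i : ℕ} (hi : i ∈ C) :
    C ∩ Finset.range (i+1) = insert i (C ∩ Finset.range i) := by
  ext x
  simp only [Finset.mem_inter, Finset.mem_range, Finset.mem_insert, Nat.lt_succ_iff]
  constructor
  · rintro ⟨hx, hxi⟩
    rcases eq_or_lt_of_le hxi with h | h
    · exact Or.inl h
    · exact Or.inr ⟨hx, h⟩
  · rintro (rfl | ⟨hx, hxi⟩)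
    · exact ⟨hi, le_rfl⟩
    · exact ⟨hx, le_of_lt hxi⟩

lemma inter_range_succ_of_not_mem {C : Finset ℕ} {i : ℕ} (hi : i ∉ C) :
    C ∩ Finset.range (i+1) = C ∩ Finset.range i := by
  ext x
  simp only [Finset.mem_inter, Finset.mem_range, Nat.lt_succ_iff]
  constructor
  · rintro ⟨hx, hxi⟩
    rcases eq_or_lt_of_le hxi with h | h
    · exact absurd (h ▸ hx) hi
    · exact ⟨hx, h⟩
  · rintro ⟨hx, hxi⟩
    exact ⟨hx, le_of_lt hxi⟩

lemma lcount_succ_of_mem {C : Finset ℕ} {i : ℕ} (hi : i ∈ C) :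
    lcount C (i+1) = lcount C i + 1 := by
  rw [lcount, inter_range_succ_of_mem hi, Finset.card_insert_of_notMem (by simp), lcount]

lemma lcount_succ_of_not_mem {C : Finset ℕ} {i : ℕ} (hi : i ∉ C) :
    lcount C (i+1) = lcount C i := by
  rw [lcount, inter_range_succ_of_not_mem hi, lcount]

-- key inequality: k + i ≤ n + l_i
lemma key_ineq {n : ℕ} {C : Finset ℕ} (hC : C ⊆ Finset.range n) {i : ℕ} (hi : i ∈ C) :
    C.card + i ≤ n + lcount C i := by
  have h2 : (C ∩ Finset.range (i+1)).card = lcount C i + 1 := by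
    rw [inter_range_succ_of_mem hi, Finset.card_insert_of_notMem (by simp), lcount]
  have h3 : C.card = (C ∩ Finset.range (i+1)).card + (C \ Finset.range (i+1)).card := by
    rw [Finset.card_inter_add_card_sdiff]
  have h5 : (C \ Finset.range (i+1)).card ≤ n - (i+1) :=
    le_trans (Finset.card_le_card (Finset.sdiff_subset_sdiff hC (le_refl _))) (range_sdiff_card _ _)
  have hin : i < n := Finset.mem_range.mp (hC hi)
  omega

-- if moreover i+1 ∉ C and i+1 < n then stronger
lemma key_ineq_strict {n : ℕ} {C : Finset ℕ} (hC : C ⊆ Finset.range n) {i : ℕ}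
    (hi : i ∈ C) (hi1 : i + 1 ∉ C) (hin : i + 1 < n) :
    C.card + i + 1 ≤ n + lcount C i := by
  have h2 : (C ∩ Finset.range (i+2)).card = lcount C i + 1 := by
    rw [inter_range_succ_of_not_mem hi1, inter_range_succ_of_mem hi,
      Finset.card_insert_of_notMem (by simp), lcount]
  have h3 : C.card = (C ∩ Finset.range (i+2)).card + (C \ Finset.range (i+2)).card := by
    rw [Finset.card_inter_add_card_sdiff]
  have h5 : (C \ Finset.range (i+2)).card ≤ n - (i+2) :=
    le_trans (Finset.card_le_card (Finset.sdiff_subset_sdiff hC (le_refl _))) (range_sdiff_card _ _)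
  omega

-- if the block from i reaches the end, then term is zero: k + i = n + l_i... we show ≥
lemma block_reaches_end {n : ℕ} {C : Finset ℕ} {i : ℕ}
    (h : Finset.Ico i n ⊆ C) (hin : i < n) :
    n + lcount C i ≤ C.card + i := by
  have hd : Disjoint (C ∩ Finset.range i) (Finset.Ico i n) := by
    apply Finset.disjoint_left.mpr
    intro x hx hx2
    simp only [Finset.mem_inter, Finset.mem_range] at hx
    simp only [Finset.mem_Ico] at hx2
    omega
  have hsub : (C ∩ Finset.range i) ∪ Finset.Ico i n ⊆ C := by
    apply Finset.union_subset (Finset.inter_subset_left) h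
  have := Finset.card_le_card hsub
  rw [Finset.card_union_of_disjoint hd, Nat.card_Ico] at this
  have : lcount C i + (n - i) ≤ C.card := this
  omega

section swap
variable {n : ℕ} {C : Finset ℕ} {j : ℕ}

lemma bstep_card (hj : j ∈ C) (hj1 : j + 1 ∉ C) :
    (insert (j+1) (C.erase j)).card = C.card := by
  rw [Finset.card_insert_of_notMem (fun h => hj1 (Finset.mem_of_mem_erase h)),
    Finset.card_erase_of_mem hj]
  have : 1 ≤ C.card := Finset.card_pos.mpr ⟨j, hj⟩
  omega

lemma bstep_lcount_le (hj : j ∈ C) (hj1 : j + 1 ∉ C) {i : ℕ} (hij : i ≤ j) :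
    lcount (insert (j+1) (C.erase j)) i = lcount C i := by
  unfold lcount
  congr 1
  ext x
  simp only [Finset.mem_inter, Finset.mem_insert, Finset.mem_erase, Finset.mem_range]
  constructor
  · rintro ⟨(rfl | ⟨hxj, hx⟩), hxi⟩
    · omega
    · exact ⟨hx, hxi⟩
  · rintro ⟨hx, hxi⟩
    exact ⟨Or.inr ⟨by omega, hx⟩, hxi⟩

lemma bstep_lcount_succ (hj : j ∈ C) (hj1 : j + 1 ∉ C) :
    lcount (insert (j+1) (C.erase j)) (j+1) = lcount C j := by
  unfold lcount
  congr 1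
  ext x
  simp only [Finset.mem_inter, Finset.mem_insert, Finset.mem_erase, Finset.mem_range]
  constructor
  · rintro ⟨(rfl | ⟨hxj, hx⟩), hxi⟩
    · omega
    · exact ⟨hx, by omega⟩
  · rintro ⟨hx, hxi⟩
    exact ⟨Or.inr ⟨by omega, hx⟩, by omega⟩

lemma bstep_lcount_gt (hj : j ∈ C) (hj1 : j + 1 ∉ C) {i : ℕ} (hij : j + 1 < i) :
    lcount (insert (j+1) (C.erase j)) i = lcount C i := by
  unfold lcount
  have h1 : insert (j+1) (C.erase j) ∩ Finset.range i
      = insert (j+1) ((C ∩ Finset.range i).erase j) := by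
    ext x
    simp only [Finset.mem_inter, Finset.mem_insert, Finset.mem_erase, Finset.mem_range]
    constructor
    · rintro ⟨(rfl | ⟨hxj, hx⟩), hxi⟩
      · exact Or.inl rfl
      · exact Or.inr ⟨hxj, hx, hxi⟩
    · rintro (rfl | ⟨hxj, hx, hxi⟩)
      · exact ⟨Or.inl rfl, hij⟩
      · exact ⟨Or.inr ⟨hxj, hx⟩, hxi⟩
  rw [h1, Finset.card_insert_of_notMem (by simp [hj1]),
    Finset.card_erase_of_mem (by simp [hj]; omega)]
  have : 1 ≤ (C ∩ Finset.range i).card :=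
    Finset.card_pos.mpr ⟨j, by simp [hj]; omega⟩
  omega

lemma potential_bstep_swap (hC : C ⊆ Finset.range n) (hj : j ∈ C) (hj1 : j + 1 ∉ C)
    (hjn : j + 1 < n) :
    potential n (bstep C j) + 2 ^ (n + 2 * lcount C j - (C.card + j) - 1) = potential n C := by
  have hkn : C.card ≤ n := by
    calc C.card ≤ (Finset.range n).card := Finset.card_le_card hC
      _ = n := Finset.card_range n
  have hE : C.card + j + 1 ≤ n + lcount C j := key_ineq_strict hC hj hj1 hjn
  rw [bstep, if_pos ⟨hj, hj1⟩]
  unfold potential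
  rw [Finset.sum_insert (fun h => hj1 (Finset.mem_of_mem_erase h))]
  have hcard := bstep_card hj hj1
  -- sum over erase is equal
  have hsum : ∑ i ∈ C.erase j,
      (2 ^ (n - (insert (j+1) (C.erase j)).card + 2 * lcount (insert (j+1) (C.erase j)) i - i)
        - 2 ^ lcount (insert (j+1) (C.erase j)) i)
      = ∑ i ∈ C.erase j, (2 ^ (n - C.card + 2 * lcount C i - i) - 2 ^ lcount C i) := by
    apply Finset.sum_congr rfl
    intro i hi
    have hiC := Finset.mem_of_mem_erase hi
    have hine : i ≠ j := Finset.ne_of_mem_erase hi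
    have hl : lcount (insert (j+1) (C.erase j)) i = lcount C i := by
      rcases lt_or_gt_of_ne hine with h | h
      · exact bstep_lcount_le hj hj1 (le_of_lt h)
      · have : j + 1 < i := by
          rcases Nat.lt_or_ge i (j+2) with h2 | h2
          · exfalso; have : i = j + 1 := by omega
            exact hj1 (this ▸ hiC)
          · omega
        exact bstep_lcount_gt hj hj1 this
    rw [hl, hcard]
  rw [hsum, hcard, bstep_lcount_succ hj hj1]
  rw [← Finset.add_sum_erase _ _ hj]
  -- now pure arithmetic
  set l := lcount C j
  set k := C.card
  have e1 : n - k + 2 * l - j = (n + 2 * l - (k + j) - 1) + 1 := by omega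
  have e2 : n - k + 2 * l - (j+1) = n + 2 * l - (k + j) - 1 := by omega
  rw [e1, e2, pow_succ]
  have h2l : 2 ^ l ≤ 2 ^ (n + 2 * l - (k + j) - 1) :=
    Nat.pow_le_pow_right (by norm_num) (by omega)
  set a := 2 ^ (n + 2 * l - (k + j) - 1)
  set b := 2 ^ l
  omega

end swap

def epow (n : ℕ) (C : Finset ℕ) (i : ℕ) : ℕ := n + 2 * lcount C i - (C.card + i)

lemma tau_exists (C : Finset ℕ) (i : ℕ) : ∃ d, i + d + 1 ∉ C :=
  ⟨C.sup id, fun h => by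
    have := Finset.le_sup (f := id) h
    simp only [id] at this
    omega⟩

def tau (C : Finset ℕ) (i : ℕ) : ℕ := i + Nat.find (tau_exists C i)

lemma tau_ge (C : Finset ℕ) (i : ℕ) : i ≤ tau C i := Nat.le_add_right _ _

lemma tau_block {C : Finset ℕ} {i : ℕ} (hi : i ∈ C) :
    ∀ x, i ≤ x → x ≤ tau C i → x ∈ C := by
  have key : ∀ m, m ≤ Nat.find (tau_exists C i) → i + m ∈ C := by
    intro m
    induction m with
    | zero => intro _; simpa using hi
    | succ m ih =>
      intro hm
      have h1 : ¬ (i + m + 1 ∉ C) := Nat.find_min (tau_exists C i) (by omega)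
      rw [← add_assoc]
      simpa using h1
  intro x hx1 hx2
  have : x = i + (x - i) := by omega
  rw [this]
  exact key _ (by unfold tau at hx2; omega)

lemma tau_succ_not_mem (C : Finset ℕ) (i : ℕ) : tau C i + 1 ∉ C :=
  Nat.find_spec (tau_exists C i)

lemma tau_mem {C : Finset ℕ} {i : ℕ} (hi : i ∈ C) : tau C i ∈ C :=
  tau_block hi _ (tau_ge C i) le_rfl

lemma epow_succ' {n : ℕ} {C : Finset ℕ} (hC : C ⊆ Finset.range n) {a : ℕ}
    (ha : a ∈ C) (ha1 : a + 1 ∈ C) : epow n C (a+1) = epow n C a + 1 := by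
  have h := key_ineq hC ha
  unfold epow
  rw [lcount_succ_of_mem ha]
  omega

lemma epow_tau {n : ℕ} {C : Finset ℕ} (hC : C ⊆ Finset.range n) {i : ℕ} (hi : i ∈ C) :
    epow n C (tau C i) = epow n C i + (tau C i - i) := by
  have hblock := tau_block hi
  have key : ∀ m, i + m ≤ tau C i → epow n C (i + m) = epow n C i + m := by
    intro m
    induction m with
    | zero => intro _; simp
    | succ m ih =>
      intro hm
      have h1 : i + m ∈ C := hblock _ (by omega) (by omega)
      have h2 : i + m + 1 ∈ C := hblock _ (by omega) (by omega)
      rw [show i + (m+1) = (i + m) + 1 by omega, epow_succ' hC h1 h2, ih (by omega)]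
      omega
  have := key (tau C i - i) (by have := tau_ge C i; omega)
  rw [show i + (tau C i - i) = tau C i by have := tau_ge C i; omega] at this
  omega

lemma geom_lt' (N : ℕ) : ∑ d ∈ Finset.range N, 2^d < 2^N := by
  induction N with
  | zero => simp
  | succ N ih =>
    rw [Finset.sum_range_succ, pow_succ]
    omega

def swappable (n : ℕ) (C : Finset ℕ) : Finset ℕ :=
  (Finset.range (n-1)).filter (fun j => j ∈ C ∧ j + 1 ∉ C)

lemma charge {n : ℕ} {C : Finset ℕ} (hC : C ⊆ Finset.range n) (hn : 2 ≤ n) :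
    potential n C ≤ ∑ j ∈ swappable n C, 2 ^ (epow n C j + 1) := by
  have hkn : C.card ≤ n := by
    calc C.card ≤ (Finset.range n).card := Finset.card_le_card hC
      _ = n := Finset.card_range n
  -- terms with tau reaching the end are zero
  have hzero : ∀ i ∈ C, ¬ (tau C i < n - 1) →
      (2 ^ (n - C.card + 2 * lcount C i - i) - 2 ^ lcount C i) = 0 := by
    intro i hi hti
    have hin : i < n := Finset.mem_range.mp (hC hi)
    have htn : tau C i < n := Finset.mem_range.mp (hC (tau_mem hi))
    have hteq : tau C i = n - 1 := by omega
    have hIco : Finset.Ico i n ⊆ C := by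
      intro x hx
      simp only [Finset.mem_Ico] at hx
      exact tau_block hi x hx.1 (by omega)
    have h1 := block_reaches_end hIco hin
    have h2 := key_ineq hC hi
    have : n - C.card + 2 * lcount C i - i = lcount C i := by omega
    rw [this]
    omega
  -- each term is at most 2 ^ epow
  have hterm : ∀ i ∈ C, (2 ^ (n - C.card + 2 * lcount C i - i) - 2 ^ lcount C i)
      ≤ 2 ^ epow n C i := by
    intro i hi
    have : n - C.card + 2 * lcount C i - i = epow n C i := by unfold epow; omega
    rw [this]
    exact Nat.sub_le _ _
  -- split potential
  rw [potential, ← Finset.sum_filter_add_sum_filter_not C (fun i => tau C i < n - 1)]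
  have h0 : ∑ i ∈ C.filter (fun i => ¬ tau C i < n - 1),
      (2 ^ (n - C.card + 2 * lcount C i - i) - 2 ^ lcount C i) = 0 := by
    apply Finset.sum_eq_zero
    intro i hi
    rw [Finset.mem_filter] at hi
    exact hzero i hi.1 hi.2
  rw [h0, add_zero]
  -- fiberwise over tau
  have hmaps : ∀ i ∈ C.filter (fun i => tau C i < n - 1), tau C i ∈ swappable n C := by
    intro i hi
    rw [Finset.mem_filter] at hi
    rw [swappable, Finset.mem_filter, Finset.mem_range]
    exact ⟨hi.2, tau_mem hi.1, tau_succ_not_mem C i⟩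
  rw [← Finset.sum_fiberwise_of_maps_to hmaps
    (fun i => 2 ^ (n - C.card + 2 * lcount C i - i) - 2 ^ lcount C i)]
  apply Finset.sum_le_sum
  intro b hb
  -- fiber bound
  set fib := (C.filter (fun i => tau C i < n - 1)).filter (fun i => tau C i = b) with hfib
  have hfibsub : ∀ i ∈ fib, i ∈ C ∧ tau C i = b := by
    intro i hi
    simp only [hfib, Finset.mem_filter] at hi
    exact ⟨hi.1.1, hi.2⟩
  calc ∑ i ∈ fib, (2 ^ (n - C.card + 2 * lcount C i - i) - 2 ^ lcount C i)
      ≤ ∑ i ∈ fib, 2 ^ (epow n C b - (b - i)) := by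
        apply Finset.sum_le_sum
        intro i hi
        obtain ⟨hiC, hit⟩ := hfibsub i hi
        have he := epow_tau hC hiC
        rw [hit] at he
        have : epow n C b - (b - i) = epow n C i := by omega
        rw [this]
        exact hterm i hiC
    _ = ∑ d ∈ fib.image (fun i => b - i), 2 ^ (epow n C b - d) := by
        rw [Finset.sum_image]
        intro x hx y hy hxy
        obtain ⟨hxC, hxt⟩ := hfibsub x hx
        obtain ⟨hyC, hyt⟩ := hfibsub y hy
        have hbx : x ≤ b := hxt ▸ tau_ge C x
        have hby : y ≤ b := hyt ▸ tau_ge C y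
        simp only at hxy
        omega
    _ ≤ ∑ d ∈ Finset.range (epow n C b + 1), 2 ^ (epow n C b - d) := by
        apply Finset.sum_le_sum_of_subset
        intro d hd
        simp only [Finset.mem_image] at hd
        obtain ⟨i, hi, rfl⟩ := hd
        obtain ⟨hiC, hit⟩ := hfibsub i hi
        have he := epow_tau hC hiC
        rw [hit] at he
        simp only [Finset.mem_range]
        omega
    _ = ∑ m ∈ Finset.range (epow n C b + 1), 2 ^ m := by
        rw [← Finset.sum_range_reflect]
        apply Finset.sum_congr rfl
        intro x hx
        simp only [Finset.mem_range] at hx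
        congr 1
        omega
    _ ≤ 2 ^ (epow n C b + 1) := le_of_lt (geom_lt' _)

lemma nat_key {n : ℕ} {C : Finset ℕ} (hC : C ⊆ Finset.range n) (hn : 2 ≤ n) :
    4 * ∑ j ∈ Finset.range (n-1), potential n (bstep C j) + potential n C
      ≤ 4 * ((n-1) * potential n C) := by
  have hsplit : ∑ j ∈ Finset.range (n-1), potential n (bstep C j)
      = ∑ j ∈ swappable n C, potential n (bstep C j)
        + ∑ j ∈ (Finset.range (n-1)).filter (fun j => ¬ (j ∈ C ∧ j + 1 ∉ C)), potential n C := by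
    rw [← Finset.sum_filter_add_sum_filter_not (Finset.range (n-1)) (fun j => j ∈ C ∧ j + 1 ∉ C)]
    congr 1
    apply Finset.sum_congr rfl
    intro j hj
    rw [Finset.mem_filter] at hj
    rw [bstep, if_neg hj.2]
  have hswap : ∀ j ∈ swappable n C,
      potential n (bstep C j) + 2 ^ (epow n C j - 1) = potential n C := by
    intro j hj
    rw [swappable, Finset.mem_filter, Finset.mem_range] at hj
    exact potential_bstep_swap hC hj.2.1 hj.2.2 (by omega)
  have hsum1 : ∑ j ∈ swappable n C, potential n (bstep C j)
        + ∑ j ∈ swappable n C, 2 ^ (epow n C j - 1)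
      = (swappable n C).card * potential n C := by
    rw [← Finset.sum_add_distrib]
    rw [Finset.sum_congr rfl hswap]
    rw [Finset.sum_const, smul_eq_mul]
  have hepos : ∀ j ∈ swappable n C, 2 ^ (epow n C j + 1) = 4 * 2 ^ (epow n C j - 1) := by
    intro j hj
    rw [swappable, Finset.mem_filter, Finset.mem_range] at hj
    have h := key_ineq_strict hC hj.2.1 hj.2.2 (by omega)
    have he : 1 ≤ epow n C j := by unfold epow; omega
    rw [show epow n C j + 1 = (epow n C j - 1) + 2 by omega, pow_add]
    ring
  have hcharge := charge hC hn
  rw [Finset.sum_congr rfl hepos] at hcharge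
  have h4 : ∑ j ∈ swappable n C, 4 * 2 ^ (epow n C j - 1)
      = 4 * ∑ j ∈ swappable n C, 2 ^ (epow n C j - 1) := by
    rw [Finset.mul_sum]
  rw [h4] at hcharge
  -- cardinalities
  have hcards : (swappable n C).card
      + ((Finset.range (n-1)).filter (fun j => ¬ (j ∈ C ∧ j + 1 ∉ C))).card = n - 1 := by
    rw [swappable, Finset.card_filter_add_card_filter_not, Finset.card_range]
  have hconst : ∑ j ∈ (Finset.range (n-1)).filter (fun j => ¬ (j ∈ C ∧ j + 1 ∉ C)), potential n C
      = ((Finset.range (n-1)).filter (fun j => ¬ (j ∈ C ∧ j + 1 ∉ C))).card * potential n C := by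
    rw [Finset.sum_const, smul_eq_mul]
  rw [hsplit, hconst]
  set A := ∑ j ∈ swappable n C, potential n (bstep C j)
  set B := ∑ j ∈ swappable n C, 2 ^ (epow n C j - 1)
  set P := potential n C
  set s := (swappable n C).card
  set r := ((Finset.range (n-1)).filter (fun j => ¬ (j ∈ C ∧ j + 1 ∉ C))).card
  have e1 : A + B = s * P := hsum1
  have e2 : P ≤ 4 * B := hcharge
  have e3 : s + r = n - 1 := hcards
  have e4 : (n - 1) * P = s * P + r * P := by rw [← e3, add_mul]
  omega

lemma tsum_pure {α : Type*} (a : α) (g : α → ℝ≥0∞) :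
    ∑' b, (PMF.pure a) b * g b = g a := by
  rw [tsum_eq_single a]
  · simp [PMF.pure_apply]
  · intro b hb
    simp [PMF.pure_apply, hb]

lemma tsum_bind {α β : Type*} (p : PMF α) (q : α → PMF β) (g : β → ℝ≥0∞) :
    ∑' b, (p.bind q) b * g b = ∑' a, p a * ∑' b, (q a) b * g b := by
  have h1 : ∀ b, (p.bind q) b * g b = ∑' a, p a * (q a) b * g b := by
    intro b
    rw [PMF.bind_apply, ENNReal.tsum_mul_right]
  simp_rw [h1]
  rw [ENNReal.tsum_comm]
  congr 1
  ext a
  rw [← ENNReal.tsum_mul_left]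
  congr 1
  ext b
  ring

lemma tsum_map {α β : Type*} (p : PMF α) (f : α → β) (g : β → ℝ≥0∞) :
    ∑' b, (p.map f) b * g b = ∑' a, p a * g (f a) := by
  rw [PMF.map, tsum_bind]
  congr 1
  ext a
  simp only [Function.comp_apply]
  rw [tsum_pure]

lemma step_bound {n : ℕ} (hn : 2 ≤ n) {C : Finset ℕ} (hC : C ⊆ Finset.range n) :
    ∑' C' : Finset ℕ, stepPMF n C C' * (potential n C' : ℝ≥0∞)
      ≤ (1 - 1 / (4 * ((n : ℝ≥0∞) - 1))) * (potential n C : ℝ≥0∞) := by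
  have hne : (Finset.range (n-1)).Nonempty := ⟨0, Finset.mem_range.mpr (by omega)⟩
  rw [stepPMF, dif_pos hne, tsum_map]
  -- reduce tsum over ℕ to finite sum
  have hz : ∀ j ∉ Finset.range (n-1),
      (PMF.uniformOfFinset (Finset.range (n-1)) hne) j * (potential n (bstep C j) : ℝ≥0∞) = 0 := by
    intro j hj
    rw [PMF.uniformOfFinset_apply, if_neg hj, zero_mul]
  rw [tsum_eq_sum hz]
  have hpred : ((n - 1 : ℕ) : ℝ≥0∞) = (n : ℝ≥0∞) - 1 := by
    rw [ENNReal.natCast_sub, Nat.cast_one]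
  have happ : ∀ j ∈ Finset.range (n-1),
      (PMF.uniformOfFinset (Finset.range (n-1)) hne) j * (potential n (bstep C j) : ℝ≥0∞)
        = (((n:ℝ≥0∞) - 1))⁻¹ * (potential n (bstep C j) : ℝ≥0∞) := by
    intro j hj
    rw [PMF.uniformOfFinset_apply, if_pos hj, Finset.card_range, hpred]
  rw [Finset.sum_congr rfl happ, ← Finset.mul_sum]
  -- set up
  set M : ℝ≥0∞ := (n : ℝ≥0∞) - 1 with hM
  have hMnat : M = ((n - 1 : ℕ) : ℝ≥0∞) := hpred.symm
  have hM0 : M ≠ 0 := by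
    rw [hMnat]
    simp only [ne_eq, Nat.cast_eq_zero]
    omega
  have hMtop : M ≠ ⊤ := by rw [hMnat]; exact ENNReal.natCast_ne_top _
  set S : ℝ≥0∞ := ∑ j ∈ Finset.range (n-1), (potential n (bstep C j) : ℝ≥0∞) with hS
  set P : ℝ≥0∞ := (potential n C : ℝ≥0∞) with hP
  have hPtop : P ≠ ⊤ := ENNReal.natCast_ne_top _
  -- cast the nat inequality
  have hnat := nat_key hC hn
  have hcast : 4 * S + P ≤ 4 * (M * P) := by
    have h := (Nat.cast_le (α := ℝ≥0∞)).mpr hnat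
    push_cast at h
    exact h
  set a : ℝ≥0∞ := 4 * M with ha
  have ha0 : a ≠ 0 := by
    rw [ha]
    exact mul_ne_zero (by norm_num) hM0
  have hatop : a ≠ ⊤ := by
    rw [ha]
    exact ENNReal.mul_ne_top (by norm_num) hMtop
  have h4S : 4 * S ≤ a * P - P := by
    apply ENNReal.le_sub_of_add_le_right hPtop
    rw [ha, mul_assoc]
    exact hcast
  have hMS : M⁻¹ * S = a⁻¹ * (4 * S) := by
    rw [ha, ENNReal.mul_inv (Or.inl (by norm_num)) (Or.inl (by norm_num)),
      show (4:ℝ≥0∞)⁻¹ * M⁻¹ * (4 * S) = ((4:ℝ≥0∞)⁻¹ * 4) * (M⁻¹ * S) from by ring,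
      ENNReal.inv_mul_cancel (by norm_num) (by norm_num), one_mul]
  have hfinal : a⁻¹ * (a * P - P) = (1 - a⁻¹) * P := by
    have h1 : a * P - P = (a - 1) * P := by
      rw [ENNReal.sub_mul (fun _ _ => hPtop), one_mul]
    rw [h1, ← mul_assoc]
    congr 1
    rw [ENNReal.mul_sub (fun _ _ => ENNReal.inv_ne_top.mpr ha0), mul_one,
      ENNReal.inv_mul_cancel ha0 hatop]
  calc M⁻¹ * S = a⁻¹ * (4 * S) := hMS
    _ ≤ a⁻¹ * (a * P - P) := mul_le_mul_right h4S _
    _ = (1 - a⁻¹) * P := hfinal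
    _ = (1 - 1 / (4 * M)) * P := by rw [one_div, ha]

lemma iter_support {n : ℕ} (hn : 2 ≤ n) {C0 : Finset ℕ} (hC : C0 ⊆ Finset.range n)
    (t : ℕ) {C : Finset ℕ} (hC' : iterPMF n C0 t C ≠ 0) : C ⊆ Finset.range n := by
  induction t generalizing C with
  | zero =>
    by_cases h : C = C0
    · rw [h]; exact hC
    · rw [iterPMF, PMF.pure_apply, if_neg h] at hC'
      exact absurd rfl hC'
  | succ t ih =>
    rw [iterPMF] at hC'
    have hmem : C ∈ ((iterPMF n C0 t).bind (stepPMF n)).support := by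
      rw [PMF.mem_support_iff]; exact hC'
    rw [PMF.mem_support_bind_iff] at hmem
    obtain ⟨a, ha, hmem⟩ := hmem
    have haC : a ⊆ Finset.range n := ih ((PMF.mem_support_iff _ _).mp ha)
    -- C in support of stepPMF n a
    have hne : (Finset.range (n-1)).Nonempty := ⟨0, Finset.mem_range.mpr (by omega)⟩
    rw [stepPMF, dif_pos hne, PMF.support_map, PMF.support_uniformOfFinset] at hmem
    obtain ⟨j, hj, rfl⟩ := hmem
    rw [Finset.mem_coe, Finset.mem_range] at hj

    rw [bstep]
    split
    · intro x hx
      rw [Finset.mem_insert] at hx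
      rcases hx with rfl | hx
      · rw [Finset.mem_range]; omega
      · exact haC (Finset.mem_of_mem_erase hx)
    · exact haC


/-- After `t` steps, the expected potential is at most `(1 - 1/(4(n-1)))^t · P(C₀)`. -/
theorem expected_potential_after_t_steps (n : ℕ) (hn : 2 ≤ n) (C0 : Finset ℕ)
    (hC : C0 ⊆ Finset.range n) (t : ℕ) :
    ∑' C : Finset ℕ, iterPMF n C0 t C * (potential n C : ℝ≥0∞) ≤
      (1 - 1 / (4 * ((n : ℝ≥0∞) - 1))) ^ t * (potential n C0 : ℝ≥0∞) := by
  induction t with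
  | zero =>
    rw [iterPMF, tsum_pure, pow_zero, one_mul]
  | succ t ih =>
    set c : ℝ≥0∞ := 1 - 1 / (4 * ((n : ℝ≥0∞) - 1)) with hc
    rw [iterPMF, tsum_bind]
    calc ∑' a, iterPMF n C0 t a * ∑' b, stepPMF n a b * (potential n b : ℝ≥0∞)
        ≤ ∑' a, iterPMF n C0 t a * (c * (potential n a : ℝ≥0∞)) := by
          apply ENNReal.tsum_le_tsum
          intro a
          by_cases h : iterPMF n C0 t a = 0
          · rw [h, zero_mul, zero_mul]
          · exact mul_le_mul_right (step_bound hn (iter_support hn hC t h)) _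
      _ = c * ∑' a, iterPMF n C0 t a * (potential n a : ℝ≥0∞) := by
          rw [← ENNReal.tsum_mul_left]
          congr 1
          ext a
          ring
      _ ≤ c * (c ^ t * (potential n C0 : ℝ≥0∞)) := mul_le_mul_right ih _
      _ = c ^ (t+1) * (potential n C0 : ℝ≥0∞) := by
          rw [← mul_assoc, ← pow_succ']
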